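/- arXiv:2402.18000 — 7 statements merged into one kernel-verified Lean document; each statement's English description precedes it below -/
import Mathlib

section
/- For the map (q,s,r) ↦ (x,y,z) given by x = q - c₀t - (1/k)e^{k(r-m(s))} sin(k(q-ct)), y = s, z = Z₀ + r + (1/k)e^{k(r-m(s))} cos(k(q-ct)), with m differentiable, the determinant of the Jacobian matrix ∂(x,y,z)/∂(q,s,r) equals 1 - e^{2k(r-m(s))}, independent of t and q. -/
open Real

/-! Only the rows of `q`- and `r`-derivatives matter: `y = s` makes the middle column `(0, 1, 0)`,
so the determinant reduces to the `2 × 2` Jacobian of `(q, r) ↦ (x, z)`, which is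
`(1 - E cos θ)(1 + E cos θ) - (E sin θ)² = 1 - E²` with `E = e^{k(r - m(s))}`. -/

theorem Matrix.det_fin_three_of_middle_col {R : Type*} [CommRing R] (a b d e f g : R) :
    !![a, 0, b; d, 1, e; f, 0, g].det = a * g - b * f := by
  simp [Matrix.det_fin_three]

theorem hasDerivAt_one_div_mul_mul_sin {k : ℝ} (hk : k ≠ 0) (e b q : ℝ) :
    HasDerivAt (fun q => 1 / k * e * sin (k * (q - b))) (e * cos (k * (q - b))) q :=
  ((((hasDerivAt_id' q).sub_const b).const_mul k).sin.const_mul (1 / k * e)).congr_deriv <| by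
    field_simp

theorem hasDerivAt_one_div_mul_mul_cos {k : ℝ} (hk : k ≠ 0) (e b q : ℝ) :
    HasDerivAt (fun q => 1 / k * e * cos (k * (q - b))) (-(e * sin (k * (q - b)))) q :=
  ((((hasDerivAt_id' q).sub_const b).const_mul k).cos.const_mul (1 / k * e)).congr_deriv <| by
    field_simp

theorem hasDerivAt_one_div_mul_exp_mul {k : ℝ} (hk : k ≠ 0) (a w r : ℝ) :
    HasDerivAt (fun r => 1 / k * exp (k * (r - a)) * w) (exp (k * (r - a)) * w) r :=
  ((((((hasDerivAt_id' r).sub_const a).const_mul k).exp).const_mul (1 / k)).mul_const w).congr_deriv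
    <| by field_simp

theorem one_sub_mul_cos_mul_one_add_mul_cos_sub_sq (E θ : ℝ) :
    (1 - E * cos θ) * (1 + E * cos θ) - -(E * sin θ) * -(E * sin θ) = 1 - E ^ 2 := by
  linear_combination (-E ^ 2) * sin_sq_add_cos_sq θ

theorem jacobian_det_lagrangian_map_general
    (k c c₀ Z₀ t : ℝ) (hk : 0 < k) (m : ℝ → ℝ)
    (x y z : ℝ → ℝ → ℝ → ℝ)
    (hx : ∀ q s r, x q s r =
      q - c₀ * t - (1 / k) * exp (k * (r - m s)) * sin (k * (q - c * t)))
    (hy : ∀ q s r, y q s r = s)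
    (hz : ∀ q s r, z q s r =
      Z₀ + r + (1 / k) * exp (k * (r - m s)) * cos (k * (q - c * t))) :
    ∀ q s r,
      Matrix.det
        !![deriv (fun q' => x q' s r) q, deriv (fun q' => y q' s r) q,
             deriv (fun q' => z q' s r) q;
           deriv (fun s' => x q s' r) s, deriv (fun s' => y q s' r) s,
             deriv (fun s' => z q s' r) s;
           deriv (fun r' => x q s r') r, deriv (fun r' => y q s r') r,
             deriv (fun r' => z q s r') r] =
      1 - exp (2 * k * (r - m s)) := by
  intro q s r
  simp only [hx, hy, hz]
  have hxq := ((hasDerivAt_id' q).sub_const (c₀ * t)).fun_sub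
    (hasDerivAt_one_div_mul_mul_sin hk.ne' (exp (k * (r - m s))) (c * t) q)
  have hzq := (hasDerivAt_one_div_mul_mul_cos hk.ne' (exp (k * (r - m s))) (c * t) q).const_add
    (Z₀ + r)
  have hxr := (hasDerivAt_one_div_mul_exp_mul hk.ne' (m s) (sin (k * (q - c * t))) r).const_sub
    (q - c₀ * t)
  have hzr := ((hasDerivAt_id' r).const_add Z₀).fun_add
    (hasDerivAt_one_div_mul_exp_mul hk.ne' (m s) (cos (k * (q - c * t))) r)
  have hexp : exp (2 * k * (r - m s)) = exp (k * (r - m s)) ^ 2 := by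
    rw [← exp_nat_mul]; ring_nf
  rw [hxq.deriv, hzq.deriv, hxr.deriv, hzr.deriv, deriv_const, deriv_const, deriv_id'',
    Matrix.det_fin_three_of_middle_col, hexp,
    one_sub_mul_cos_mul_one_add_mul_cos_sub_sq]

/-- the Jacobian determinant of the Lagrangian flow map equals
1 - e^{2k(r - m(s))}, independent of t and q. -/
theorem jacobian_det_lagrangian_map
    (k c c₀ Z₀ t : ℝ) (hk : 0 < k) (m : ℝ → ℝ) (hm : Differentiable ℝ m)
    (x y z : ℝ → ℝ → ℝ → ℝ)
    (hx : ∀ q s r, x q s r =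
      q - c₀ * t - (1 / k) * exp (k * (r - m s)) * sin (k * (q - c * t)))
    (hy : ∀ q s r, y q s r = s)
    (hz : ∀ q s r, z q s r =
      Z₀ + r + (1 / k) * exp (k * (r - m s)) * cos (k * (q - c * t))) :
    ∀ q s r,
      Matrix.det
        !![deriv (fun q' => x q' s r) q, deriv (fun q' => y q' s r) q,
             deriv (fun q' => z q' s r) q;
           deriv (fun s' => x q s' r) s, deriv (fun s' => y q s' r) s,
             deriv (fun s' => z q s' r) s;
           deriv (fun r' => x q s r') r, deriv (fun r' => y q s r') r,
             deriv (fun r' => z q s r') r] =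
      1 - exp (2 * k * (r - m s)) :=
  jacobian_det_lagrangian_map_general k c c₀ Z₀ t hk m x y z hx hy hz
end

section
/- With ξ = k(r - m(s)) < 0, the Eulerian vertical derivative of the density ρ(s,r) = F(e^{2ξ}/(2k) - r + c₀m(s)/c) along the flow map satisfies ∂ρ/∂z = (∂ρ/∂r)·(1 - e^ξ cos θ)/(1 - e^{2ξ}) < 0, assuming F' > 0. -/
open Real

/-! By the chain rule `∂ρ/∂r = F'(·) (e^{2ξ} - 1)`, which is negative since `F' > 0` and `ξ < 0`.
The geometric factor is positive: `e^ξ cos θ ≤ e^ξ < 1` and `e^{2ξ} < 1`. -/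

theorem hasDerivAt_exp_mul_sub_div_sub (a b x : ℝ) (ha : a ≠ 0) :
    HasDerivAt (fun y => exp (a * (y - b)) / a - y) (exp (a * (x - b)) - 1) x := by
  have hlin : HasDerivAt (fun y => a * (y - b)) a x := by
    simpa using ((hasDerivAt_id x).sub_const b).const_mul a
  refine ((hlin.exp.div_const a).sub (hasDerivAt_id' x)).congr_deriv ?_
  rw [mul_div_cancel_right₀ _ ha]

theorem one_sub_exp_mul_cos_pos {x : ℝ} (hx : x < 0) (θ : ℝ) : 0 < 1 - exp x * cos θ := by
  have hcos : exp x * cos θ ≤ exp x := mul_le_of_le_one_right (exp_pos x).le (cos_le_one θ)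
  linarith [exp_lt_one_iff.mpr hx]

theorem density_decreasing_with_height_general
    (k c c₀ θ : ℝ) (hk : 0 < k)
    (F : ℝ → ℝ) (hF : Differentiable ℝ F) (hF' : ∀ x, 0 < deriv F x)
    (m : ℝ → ℝ)
    (ρ : ℝ → ℝ → ℝ)
    (hρ : ∀ s r, ρ s r =
      F (exp (2 * k * (r - m s)) / (2 * k) - r + c₀ * m s / c)) :
    ∀ s r, k * (r - m s) < 0 →
      deriv (fun r' => ρ s r') r *
        ((1 - exp (k * (r - m s)) * cos θ) / (1 - exp (2 * k * (r - m s)))) < 0 := by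
  intro s r hξ
  have hu := (hasDerivAt_exp_mul_sub_div_sub (2 * k) (m s) r (by positivity)).add_const
    (c₀ * m s / c)
  have hρr : HasDerivAt (fun r' => ρ s r')
      (deriv F (exp (2 * k * (r - m s)) / (2 * k) - r + c₀ * m s / c) *
        (exp (2 * k * (r - m s)) - 1)) r := by
    simp only [hρ]
    exact (hF _).hasDerivAt.comp r hu
  have hexp : exp (2 * k * (r - m s)) < 1 := exp_lt_one_iff.mpr (by linarith)
  refine mul_neg_of_neg_of_pos ?_ (div_pos (one_sub_exp_mul_cos_pos hξ θ) (sub_pos.mpr hexp))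
  rw [hρr.deriv]
  exact mul_neg_of_pos_of_neg (hF' _) (sub_neg.mpr hexp)

/-- the Eulerian vertical derivative of the density,
∂ρ/∂z = ρ_r (1 - e^ξ cos θ)/(1 - e^{2ξ}), is strictly negative. -/
theorem density_decreasing_with_height
    (k c c₀ f β fhat g θ : ℝ) (hk : 0 < k) (hc : 0 < c)
    (hghat : 0 < fhat * c₀ + g)
    (F : ℝ → ℝ) (hF : Differentiable ℝ F) (hF' : ∀ x, 0 < deriv F x)
    (m : ℝ → ℝ)
    (hm : ∀ s, m s = (2 * f * c * s + β * c * s ^ 2) / (2 * (fhat * c₀ + g)))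
    (ρ : ℝ → ℝ → ℝ)
    (hρ : ∀ s r, ρ s r =
      F (exp (2 * k * (r - m s)) / (2 * k) - r + c₀ * m s / c)) :
    ∀ s r, k * (r - m s) < 0 →
      deriv (fun r' => ρ s r') r *
        ((1 - exp (k * (r - m s)) * cos θ) / (1 - exp (2 * k * (r - m s)))) < 0 :=
  density_decreasing_with_height_general k c c₀ θ hk F hF hF' m ρ hρ
end

section
/- If kc² + f̂c - (f̂c₀ + g) = 0, ξ = k(r-m(s)) < 0, θ arbitrary, and ρ > 0, then the Eulerian pressure gradient component ∂P/∂z computed from the label-coordinate gradient (P_q, P_s, P_r) = (0, -ρ(kc²+f̂c)m_s e^{2ξ} + ρ(f+βs)c₀, ρ(kc²+f̂c)e^{2ξ} - ρ(f̂c₀+g)) via the inverse Jacobian equals -ρ(f̂c₀+g)(1 - e^ξ cos θ), which is strictly negative when f̂c₀+g > 0. -/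
open Real

/-! The dispersion relation `k c² + f̂ c = f̂ c₀ + g` turns `P_r` into `-ρ (f̂ c₀ + g) (1 - e^{2ξ})`,
which cancels the denominator of `∂r/∂z`; since `ξ < 0`, `e^ξ cos θ ≤ e^ξ < 1`. -/

theorem mul_sub_mul_div_one_sub {a b C : ℝ} (ha : a ≠ 1) :
    (C * a - C) * (b / (1 - a)) = -(C * b) := by
  have : 1 - a ≠ 0 := sub_ne_zero.2 ha.symm
  field_simp
  ring

theorem exp_mul_cos_lt_one {ξ : ℝ} (hξ : ξ < 0) (θ : ℝ) : exp ξ * cos θ < 1 :=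
  (mul_le_of_le_one_right (exp_pos ξ).le (cos_le_one θ)).trans_lt (exp_lt_one_iff.2 hξ)

theorem pressure_decreasing_with_height_general
    (k c c₀ fhat g ρ ξ θ : ℝ)
    (hρ : 0 < ρ)
    (hghat : 0 < fhat * c₀ + g)
    (hdisp : k * c ^ 2 + fhat * c - (fhat * c₀ + g) = 0)
    (hξ : ξ < 0)
    (Pq Ps Pr : ℝ)
    (hPq : Pq = 0)
    (hPr : Pr = ρ * (k * c ^ 2 + fhat * c) * exp (2 * ξ) - ρ * (fhat * c₀ + g)) :
    Pq * (exp ξ * sin θ / (1 - exp (2 * ξ))) + Ps * 0 +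
        Pr * ((1 - exp ξ * cos θ) / (1 - exp (2 * ξ))) =
      -(ρ * (fhat * c₀ + g) * (1 - exp ξ * cos θ)) ∧
    -(ρ * (fhat * c₀ + g) * (1 - exp ξ * cos θ)) < 0 := by
  have hA : k * c ^ 2 + fhat * c = fhat * c₀ + g := sub_eq_zero.1 hdisp
  have he : exp (2 * ξ) ≠ 1 := (exp_lt_one_iff.2 (by linarith)).ne
  refine ⟨?_, neg_neg_of_pos ?_⟩
  · rw [hPq, hPr, hA, mul_sub_mul_div_one_sub he]
    ring
  · exact mul_pos (mul_pos hρ hghat) (sub_pos.2 (exp_mul_cos_lt_one hξ θ))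

/-- the Eulerian vertical pressure gradient equals
-ρ(fhatc₀+g)(1 - e^ξ cos θ) and is strictly negative. -/
theorem pressure_decreasing_with_height
    (k c c₀ f β fhat g s ms ρ ξ θ : ℝ)
    (hk : 0 < k) (hc : 0 < c) (hρ : 0 < ρ)
    (hghat : 0 < fhat * c₀ + g)
    (hdisp : k * c ^ 2 + fhat * c - (fhat * c₀ + g) = 0)
    (hξ : ξ < 0)
    (hms : ms = (f + β * s) * c / (fhat * c₀ + g))
    (Pq Ps Pr : ℝ)
    (hPq : Pq = 0)
    (hPs : Ps = -(ρ * (k * c ^ 2 + fhat * c) * ms * exp (2 * ξ)) + ρ * (f + β * s) * c₀)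
    (hPr : Pr = ρ * (k * c ^ 2 + fhat * c) * exp (2 * ξ) - ρ * (fhat * c₀ + g)) :
    Pq * (exp ξ * sin θ / (1 - exp (2 * ξ))) + Ps * 0 +
        Pr * ((1 - exp ξ * cos θ) / (1 - exp (2 * ξ))) =
      -(ρ * (fhat * c₀ + g) * (1 - exp ξ * cos θ)) ∧
    -(ρ * (fhat * c₀ + g) * (1 - exp ξ * cos θ)) < 0 :=
  pressure_decreasing_with_height_general k c c₀ fhat g ρ ξ θ hρ hghat hdisp hξ Pq Ps Pr hPq hPr
end

section
/- Define vector fields in label coordinates u = -c₀ + ce^ξ cos θ, w = ce^ξ sin θ with ξ = k(r-m(s)), θ = k(q-ct). The mixed partial compatibility conditions P_{sr} = P_{rs} hold for the system P_q = 0, P_s = -ρ(kc²+f̂c)m'(s)e^{2ξ} + ρ(f+βs)c₀, P_r = ρ(kc²+f̂c)e^{2ξ} - ρ(f̂c₀+g), where ρ(s,r) = F(e^{2ξ}/(2k) - r + c₀m(s)/c), m(s) = (2fcs+βcs²)/(2(f̂c₀+g)), kc²+f̂c = f̂c₀+g, and F is C¹. -/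
/-!
With `A(s, r) = e^{2ξ}/(2k) - r + c₀ m(s)/c`, the dispersion relation `kc² + f̂c = ĝ` and
`m' = (f + βs)c/ĝ` turn the system into `P_s = ĝ F(A) ∂_s A`, `P_r = ĝ F(A) ∂_r A`. Both mixed
partials of such a field equal `ĝ (F'(A) ∂_r A ∂_s A + F(A) ∂_r ∂_s A)`, and `∂_r ∂_s A = ∂_s ∂_r A`
is checked directly.
-/

open Real

theorem deriv_comp_mul_eq_of_hasDerivAt_mixed {F : ℝ → ℝ} {A Aₛ Aᵣ : ℝ → ℝ → ℝ} {s r a : ℝ}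
    (hF : DifferentiableAt ℝ F (A s r))
    (hAᵣ : HasDerivAt (fun r' => A s r') (Aᵣ s r) r)
    (hAₛ : HasDerivAt (fun s' => A s' r) (Aₛ s r) s)
    (hAₛᵣ : HasDerivAt (fun r' => Aₛ s r') a r)
    (hAᵣₛ : HasDerivAt (fun s' => Aᵣ s' r) a s) :
    deriv (fun r' => F (A s r') * Aₛ s r') r = deriv (fun s' => F (A s' r) * Aᵣ s' r) s := by
  have hr : HasDerivAt (fun r' => F (A s r') * Aₛ s r') _ r :=
    (hF.hasDerivAt.comp r hAᵣ).mul hAₛᵣ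
  have hs : HasDerivAt (fun s' => F (A s' r) * Aᵣ s' r) _ s :=
    (hF.hasDerivAt.comp s hAₛ).mul hAᵣₛ
  rw [hr.deriv, hs.deriv, Function.comp_apply, Function.comp_apply]
  ring

theorem hasDerivAt_quadratic_div (f β c G s : ℝ) :
    HasDerivAt (fun x => (2 * f * c * x + β * c * x ^ 2) / (2 * G)) ((f + β * s) * c / G) s := by
  have h := ((((hasDerivAt_id s).const_mul (2 * f * c)).add
    ((hasDerivAt_pow 2 s).const_mul (β * c))).div_const (2 * G))
  refine h.congr_deriv ?_
  by_cases hG : G = 0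
  · simp [hG]
  · field_simp
    ring

theorem hasDerivAt_exp_mul_sub_const (a b x : ℝ) :
    HasDerivAt (fun y => exp (a * (y - b))) (a * exp (a * (x - b))) x := by
  have h := (((hasDerivAt_id x).sub_const b).const_mul a).exp
  refine h.congr_deriv ?_
  simp only [id, mul_one]
  ring

theorem hasDerivAt_exp_mul_const_sub (a b : ℝ) {m : ℝ → ℝ} {x : ℝ} (hm : DifferentiableAt ℝ m x) :
    HasDerivAt (fun y => exp (a * (b - m y))) (-(a * deriv m x * exp (a * (b - m x)))) x := by
  have h := (((hasDerivAt_const x b).sub hm.hasDerivAt).const_mul a).exp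
  refine h.congr_deriv ?_
  simp only [Pi.sub_apply]
  ring

noncomputable def labelPotential (k c c₀ : ℝ) (m : ℝ → ℝ) (s r : ℝ) : ℝ :=
  exp (2 * k * (r - m s)) / (2 * k) - r + c₀ * m s / c

section labelPotential

variable {k c c₀ : ℝ} {m : ℝ → ℝ}

theorem hasDerivAt_labelPotential_right (hk : k ≠ 0) (s r : ℝ) :
    HasDerivAt (fun r' => labelPotential k c c₀ m s r') (exp (2 * k * (r - m s)) - 1) r := by
  have h := (((hasDerivAt_exp_mul_sub_const (2 * k) (m s) r).div_const (2 * k)).sub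
    (hasDerivAt_id r)).add_const (c₀ * m s / c)
  refine h.congr_deriv ?_
  field_simp

theorem hasDerivAt_labelPotential_left (hk : k ≠ 0) (r : ℝ) {s : ℝ}
    (hm : DifferentiableAt ℝ m s) :
    HasDerivAt (fun s' => labelPotential k c c₀ m s' r)
      (deriv m s * (c₀ / c - exp (2 * k * (r - m s)))) s := by
  have h := (((hasDerivAt_exp_mul_const_sub (2 * k) r hm).div_const (2 * k)).sub_const r).add
    ((hm.hasDerivAt.const_mul c₀).div_const c)
  refine h.congr_deriv ?_
  field_simp
  ring

end labelPotential

/-- mixed partial compatibility P_{sr} = P_{rs} for the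
label-coordinate pressure gradient system. -/
theorem pressure_gradient_compatibility
    (k c c₀ f β fhat g : ℝ) (hk : 0 < k) (hc : 0 < c)
    (hghat : 0 < fhat * c₀ + g)
    (hdisp : k * c ^ 2 + fhat * c = fhat * c₀ + g)
    (F : ℝ → ℝ) (hF : ContDiff ℝ 1 F)
    (m : ℝ → ℝ)
    (hm : ∀ s, m s = (2 * f * c * s + β * c * s ^ 2) / (2 * (fhat * c₀ + g)))
    (ρ Ps Pr : ℝ → ℝ → ℝ)
    (hρ : ∀ s r, ρ s r =
      F (exp (2 * k * (r - m s)) / (2 * k) - r + c₀ * m s / c))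
    (hPs : ∀ s r, Ps s r =
      -(ρ s r * (k * c ^ 2 + fhat * c) * deriv m s * exp (2 * k * (r - m s))) +
        ρ s r * (f + β * s) * c₀)
    (hPr : ∀ s r, Pr s r =
      ρ s r * (k * c ^ 2 + fhat * c) * exp (2 * k * (r - m s)) -
        ρ s r * (fhat * c₀ + g)) :
    ∀ s r, deriv (fun r' => Ps s r') r = deriv (fun s' => Pr s' r) s := by
  intro s r
  set ĝ := fhat * c₀ + g
  set A := labelPotential k c c₀ m
  set G := fun x => ĝ * F x
  have hm' : ∀ x, HasDerivAt m ((f + β * x) * c / ĝ) x := fun x => by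
    rw [show m = _ from funext hm]
    exact hasDerivAt_quadratic_div f β c ĝ x
  have hmd : Differentiable ℝ m := fun x => (hm' x).differentiableAt
  have hρA : ∀ s r, ρ s r = F (A s r) := hρ
  have hPsA : ∀ s', (fun r' => Ps s' r') =
      fun r' => G (A s' r') * (deriv m s' * (c₀ / c - exp (2 * k * (r' - m s')))) := by
    intro s'
    funext r'
    rw [hPs, hρA, hdisp, (hm' s').deriv]
    field_simp
    ring
  have hPrA : (fun s' => Pr s' r) =
      fun s' => G (A s' r) * (exp (2 * k * (r - m s')) - 1) := by
    funext s'
    rw [hPr, hρA, hdisp]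
    ring
  have hAₛᵣ : HasDerivAt (fun r' => deriv m s * (c₀ / c - exp (2 * k * (r' - m s))))
      (-(2 * k * deriv m s * exp (2 * k * (r - m s)))) r :=
    (((hasDerivAt_exp_mul_sub_const (2 * k) (m s) r).const_sub _).const_mul _).congr_deriv
      (by ring)
  rw [hPsA, hPrA]
  exact deriv_comp_mul_eq_of_hasDerivAt_mixed
    (Aₛ := fun s r => deriv m s * (c₀ / c - exp (2 * k * (r - m s))))
    (Aᵣ := fun s r => exp (2 * k * (r - m s)) - 1)
    ((contDiff_const.mul hF).differentiable one_ne_zero _)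
    (hasDerivAt_labelPotential_right hk.ne' s r) (hasDerivAt_labelPotential_left hk.ne' r (hmd s))
    hAₛᵣ ((hasDerivAt_exp_mul_const_sub (2 * k) r (hmd s)).sub_const 1)
end

section
/- For 0 < X < 1 and A ≥ 8, the polynomial Ψ(X) = 1 + X(AX - X² - 3) satisfies Ψ(X) ≥ Ψ(X₁) = (2A³ + (18 - 2A²)√(A²-9) - 27A)/27 + 1 > 0, where X₁ = (A - √(A²-9))/3 is the unique critical point of Ψ in (0,1); in particular Ψ(X) > 0 on (0,1). -/
/-!
The critical point `X₁` is the smaller root of `3X² - 2AX + 3`, and `Ψ' = -(3X² - 2AX + 3)`.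
Using `3X₁² = 2AX₁ - 3` one finds `Ψ X - Ψ X₁ = (X - X₁)² (A - X - 2X₁)`, which is nonnegative
for `X < 1` because `X₁ < 1` and `A > 3`, and `Ψ X₁ = (1 - X₁)² (X₁ + 2) / 2`, which is positive.
-/

open Real

namespace LeeWave

noncomputable section

def psi (A X : ℝ) : ℝ := 1 + X * (A * X - X ^ 2 - 3)

def criticalPoint (A : ℝ) : ℝ := (A - √(A ^ 2 - 9)) / 3

variable {A : ℝ}

lemma sq_sqrt_sub_nine (hA : 3 ≤ A) : √(A ^ 2 - 9) ^ 2 = A ^ 2 - 9 :=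
  sq_sqrt (by nlinarith)

lemma criticalPoint_isRoot (hA : 3 ≤ A) :
    3 * criticalPoint A ^ 2 - 2 * A * criticalPoint A + 3 = 0 := by
  unfold criticalPoint
  linear_combination (1 / 3 : ℝ) * sq_sqrt_sub_nine hA

lemma criticalPoint_lt_one (hA : 3 < A) : criticalPoint A < 1 := by
  have hs := sq_sqrt_sub_nine hA.le
  have : A - 3 < √(A ^ 2 - 9) := by nlinarith [sqrt_nonneg (A ^ 2 - 9)]
  unfold criticalPoint
  linarith

lemma hasDerivAt_psi (X : ℝ) : HasDerivAt (psi A) (2 * A * X - 3 * X ^ 2 - 3) X := by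
  have h := ((((hasDerivAt_pow 2 X).const_mul A).sub (hasDerivAt_pow 3 X)).sub
    ((hasDerivAt_id X).const_mul 3)).const_add 1
  refine (h.congr_deriv (by push_cast; ring)).congr_of_eventuallyEq
    (Filter.Eventually.of_forall fun x => ?_)
  simp only [psi, Pi.sub_apply, id_eq]
  ring

/-- The second root of `Ψ'` is `(A + √(A² - 9)) / 3 ≥ 1`, so it is never hit. -/
lemma deriv_psi_eq_zero_iff (hA : 3 ≤ A) {X : ℝ} (hX : X < 1) :
    deriv (psi A) X = 0 ↔ X = criticalPoint A := by
  have hs := sq_sqrt_sub_nine hA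
  have hfactor : deriv (psi A) X
      = -(X - criticalPoint A) * (3 * X - (A + √(A ^ 2 - 9))) := by
    rw [(hasDerivAt_psi X).deriv, criticalPoint]
    linear_combination (-1 / 3 : ℝ) * hs
  have hother : 3 * X - (A + √(A ^ 2 - 9)) ≠ 0 := by
    nlinarith [sqrt_nonneg (A ^ 2 - 9)]
  rw [hfactor, mul_eq_zero, neg_eq_zero, sub_eq_zero]
  simp only [hother, or_false]

lemma psi_sub_psi_of_isRoot {c : ℝ} (hc : 3 * c ^ 2 - 2 * A * c + 3 = 0) (X : ℝ) :
    psi A X - psi A c = (X - c) ^ 2 * (A - X - 2 * c) := by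
  unfold psi
  linear_combination (c - X) * hc

lemma psi_of_isRoot {c : ℝ} (hc : 3 * c ^ 2 - 2 * A * c + 3 = 0) :
    psi A c = (1 - c) ^ 2 * (c + 2) / 2 := by
  unfold psi
  linear_combination (-c / 2) * hc

lemma psi_criticalPoint_le (hA : 3 < A) {X : ℝ} (hX : X < 1) :
    psi A (criticalPoint A) ≤ psi A X := by
  have hc := criticalPoint_lt_one hA
  have hdiff := psi_sub_psi_of_isRoot (criticalPoint_isRoot hA.le) X
  nlinarith [sq_nonneg (X - criticalPoint A)]

lemma psi_criticalPoint_pos (hA : 3 < A) : 0 < psi A (criticalPoint A) := by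
  have hc := criticalPoint_lt_one hA
  have hc₀ : 0 < criticalPoint A := by
    have hs := sq_sqrt_sub_nine hA.le
    unfold criticalPoint
    nlinarith [sqrt_nonneg (A ^ 2 - 9)]
  rw [psi_of_isRoot (criticalPoint_isRoot hA.le)]
  have : 0 < 1 - criticalPoint A := by linarith
  positivity

lemma psi_criticalPoint_eq (hA : 3 ≤ A) :
    psi A (criticalPoint A)
      = (2 * A ^ 3 + (18 - 2 * A ^ 2) * √(A ^ 2 - 9) - 27 * A) / 27 + 1 := by
  have hs := sq_sqrt_sub_nine hA
  unfold psi criticalPoint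
  linear_combination (√(A ^ 2 - 9) / 27) * hs

end

end LeeWave

open LeeWave in
/-- for A ≥ 8, Ψ(X) = 1 + X(AX - X² - 3) attains its minimum on (0,1)
at the unique critical point X₁ = (A - √(A²-9))/3, with positive minimum value;
hence Ψ > 0 on (0,1). -/
theorem psi_positive_on_unit_interval
    (A : ℝ) (hA : 8 ≤ A)
    (Ψ : ℝ → ℝ) (hΨ : ∀ X, Ψ X = 1 + X * (A * X - X ^ 2 - 3))
    (X₁ : ℝ) (hX₁ : X₁ = (A - Real.sqrt (A ^ 2 - 9)) / 3) :
    (∀ X ∈ Set.Ioo (0 : ℝ) 1, Ψ X₁ ≤ Ψ X) ∧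
    (∀ X ∈ Set.Ioo (0 : ℝ) 1, deriv Ψ X = 0 ↔ X = X₁) ∧
    Ψ X₁ = (2 * A ^ 3 + (18 - 2 * A ^ 2) * Real.sqrt (A ^ 2 - 9) - 27 * A) / 27 + 1 ∧
    0 < Ψ X₁ ∧
    ∀ X ∈ Set.Ioo (0 : ℝ) 1, 0 < Ψ X := by
  obtain rfl : Ψ = psi A := funext hΨ
  obtain rfl : X₁ = criticalPoint A := hX₁
  have hA₃ : 3 < A := by linarith
  have hmin : ∀ X ∈ Set.Ioo (0 : ℝ) 1, psi A (criticalPoint A) ≤ psi A X :=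
    fun X hX => psi_criticalPoint_le hA₃ hX.2
  refine ⟨hmin, fun X hX => deriv_psi_eq_zero_iff hA₃.le hX.2, psi_criticalPoint_eq hA₃.le,
    psi_criticalPoint_pos hA₃, fun X hX => ?_⟩
  exact (psi_criticalPoint_pos hA₃).trans_le (hmin X hX)
end

section
/- Let γ₁ = -K e^ξ sin θ/(1-e^{2ξ}), γ₂ = -2kc e^{2ξ}/(1-e^{2ξ}), γ₃ = K(e^ξ cos θ - e^{2ξ})/(1-e^{2ξ}) with K = k(f+βs)c²/ĝ, ξ = k(r - m(s)), and m_s = (f+βs)c/ĝ. Then γ₁·∂γ₁/∂r + γ₂·∂γ₂/∂r + γ₃·∂γ₃/∂r (derivatives at fixed s, θ) multiplied by the factor (1-e^ξcos θ)/(1-e^{2ξ}) (coming from ∂r/∂z) equals K²·k e^{2ξ}·(1-e^ξ cos θ)/(1-e^{2ξ})⁴ · [1 - 3e^ξ cos θ + 3e^{2ξ} - e^{3ξ} cos θ + (8/m_s²)e^{2ξ}]. -/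
/-!
Everything is a function of `E = e^ξ`, with `dE/dr = k E`, `e^{2ξ} = E²`, `e^{3ξ} = E³`.
In terms of `u = E/(1-E²)` and `v = E²/(1-E²)` one has `γ₁ = -K sin θ · u`, `γ₂ = -2kc · v`,
`γ₃ = K (cos θ · u - v)`, and `u' = kE(1+E²)/(1-E²)²`, `v' = 2kE²/(1-E²)²`. Collecting terms,
`Σ γᵢ γᵢ' = kE²/(1-E²)³ · (K² P + 8k²c²E²)`, where `sin² θ + cos² θ = 1` reduces `P` to the cubic
`1 - 3E cos θ + 3E² - E³ cos θ`; finally `kc = K/m_s`.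
-/

open Real

theorem exp_ofNat_mul_mul (n : ℕ) [n.AtLeastTwo] (k x : ℝ) :
    exp (no_index (OfNat.ofNat n) * k * x) = exp (k * x) ^ n := by
  rw [mul_assoc, ← Nat.cast_ofNat, Real.exp_nat_mul]
  rfl

theorem hasDerivAt_exp_mul_sub (k a r : ℝ) :
    HasDerivAt (fun x => exp (k * (x - a))) (k * exp (k * (r - a))) r := by
  simpa [mul_comm] using (((hasDerivAt_id r).sub_const a).const_mul k).exp

namespace HasDerivAt

variable {e : ℝ → ℝ} {e' r : ℝ}

theorem div_one_sub_sq (he : HasDerivAt e e' r) (h : 1 - e r ^ 2 ≠ 0) :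
    HasDerivAt (fun x => e x / (1 - e x ^ 2)) (e' * (1 + e r ^ 2) / (1 - e r ^ 2) ^ 2) r := by
  refine (he.div ((he.fun_pow 2).const_sub 1) h).congr_deriv ?_
  push_cast
  ring

theorem sq_div_one_sub_sq (he : HasDerivAt e e' r) (h : 1 - e r ^ 2 ≠ 0) :
    HasDerivAt (fun x => e x ^ 2 / (1 - e x ^ 2)) (2 * e r * e' / (1 - e r ^ 2) ^ 2) r := by
  refine ((he.fun_pow 2).div ((he.fun_pow 2).const_sub 1) h).congr_deriv ?_
  field_simp
  ring

end HasDerivAt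

theorem vorticity_cubic_of_sin_sq_add_cos_sq {S C : ℝ} (hSC : S ^ 2 + C ^ 2 = 1) (E : ℝ) :
    S ^ 2 * (1 + E ^ 2) + (C - E) * (C * (1 + E ^ 2) - 2 * E) =
      1 - 3 * E * C + 3 * E ^ 2 - E ^ 3 * C := by
  linear_combination (1 + E ^ 2) * hSC

theorem vorticity_sum_mul_deriv {e γ₁ γ₂ γ₃ : ℝ → ℝ} {K k c S C r : ℝ}
    (he : HasDerivAt e (k * e r) r) (hden : 1 - e r ^ 2 ≠ 0)
    (hγ₁ : γ₁ = fun x => -(K * S) * (e x / (1 - e x ^ 2)))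
    (hγ₂ : γ₂ = fun x => -(2 * k * c) * (e x ^ 2 / (1 - e x ^ 2)))
    (hγ₃ : γ₃ = fun x => K * (C * (e x / (1 - e x ^ 2)) - e x ^ 2 / (1 - e x ^ 2))) :
    γ₁ r * deriv γ₁ r + γ₂ r * deriv γ₂ r + γ₃ r * deriv γ₃ r =
      k * e r ^ 2 / (1 - e r ^ 2) ^ 3 *
        (K ^ 2 * (S ^ 2 * (1 + e r ^ 2) + (C - e r) * (C * (1 + e r ^ 2) - 2 * e r)) +
          8 * k ^ 2 * c ^ 2 * e r ^ 2) := by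
  have hu := he.div_one_sub_sq hden
  have hv := he.sq_div_one_sub_sq hden
  subst hγ₁ hγ₂ hγ₃
  rw [(hu.const_mul _).deriv, (hv.const_mul _).deriv,
    (((hu.const_mul C).fun_sub hv).const_mul K).deriv]
  field_simp
  ring

theorem vorticity_magnitude_key_identity_general
    (k c ghat f β s θ K ms : ℝ)
    (hc : 0 < c) (hghat : 0 < ghat) (hfs : f + β * s ≠ 0)
    (hK : K = k * (f + β * s) * c ^ 2 / ghat)
    (hms : ms = (f + β * s) * c / ghat)
    (m : ℝ → ℝ) (γ₁ γ₂ γ₃ : ℝ → ℝ)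
    (hγ₁ : ∀ r, γ₁ r = -(K * exp (k * (r - m s)) * sin θ /
      (1 - exp (2 * k * (r - m s)))))
    (hγ₂ : ∀ r, γ₂ r = -(2 * k * c * exp (2 * k * (r - m s)) /
      (1 - exp (2 * k * (r - m s)))))
    (hγ₃ : ∀ r, γ₃ r = K * (exp (k * (r - m s)) * cos θ - exp (2 * k * (r - m s))) /
      (1 - exp (2 * k * (r - m s)))) :
    ∀ r, k * (r - m s) < 0 →
      (γ₁ r * deriv γ₁ r + γ₂ r * deriv γ₂ r + γ₃ r * deriv γ₃ r) *
          ((1 - exp (k * (r - m s)) * cos θ) / (1 - exp (2 * k * (r - m s)))) =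
        K ^ 2 * k * exp (2 * k * (r - m s)) *
          (1 - exp (k * (r - m s)) * cos θ) / (1 - exp (2 * k * (r - m s))) ^ 4 *
          (1 - 3 * exp (k * (r - m s)) * cos θ + 3 * exp (2 * k * (r - m s)) -
            exp (3 * k * (r - m s)) * cos θ + 8 / ms ^ 2 * exp (2 * k * (r - m s))) := by
  intro r hr
  simp only [exp_ofNat_mul_mul] at hγ₁ hγ₂ hγ₃ ⊢
  have hden : 1 - exp (k * (r - m s)) ^ 2 ≠ 0 := by
    have : exp (k * (r - m s)) ^ 2 < 1 :=
      pow_lt_one₀ (exp_pos _).le (exp_lt_one_iff.mpr hr) two_ne_zero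
    linarith
  have hms₀ : ms ≠ 0 := hms ▸ div_ne_zero (mul_ne_zero hfs hc.ne') hghat.ne'
  have hKms : K = k * c * ms := by rw [hK, hms]; ring
  rw [vorticity_sum_mul_deriv (K := K) (c := c) (S := sin θ) (C := cos θ)
    (hasDerivAt_exp_mul_sub k (m s) r) hden
    (funext fun x => by rw [hγ₁]; ring) (funext fun x => by rw [hγ₂]; ring)
    (funext fun x => by rw [hγ₃]; ring),
    vorticity_cubic_of_sin_sq_add_cos_sq (sin_sq_add_cos_sq θ), hKms]
  field_simp

/-- key vorticity-magnitude computation (4.5). -/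
theorem vorticity_magnitude_key_identity
    (k c ghat f β s θ K ms : ℝ)
    (hk : 0 < k) (hc : 0 < c) (hghat : 0 < ghat) (hfs : f + β * s ≠ 0)
    (hK : K = k * (f + β * s) * c ^ 2 / ghat)
    (hms : ms = (f + β * s) * c / ghat)
    (m : ℝ → ℝ) (γ₁ γ₂ γ₃ : ℝ → ℝ)
    (hγ₁ : ∀ r, γ₁ r = -(K * exp (k * (r - m s)) * sin θ /
      (1 - exp (2 * k * (r - m s)))))
    (hγ₂ : ∀ r, γ₂ r = -(2 * k * c * exp (2 * k * (r - m s)) /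
      (1 - exp (2 * k * (r - m s)))))
    (hγ₃ : ∀ r, γ₃ r = K * (exp (k * (r - m s)) * cos θ - exp (2 * k * (r - m s))) /
      (1 - exp (2 * k * (r - m s)))) :
    ∀ r, k * (r - m s) < 0 →
      (γ₁ r * deriv γ₁ r + γ₂ r * deriv γ₂ r + γ₃ r * deriv γ₃ r) *
          ((1 - exp (k * (r - m s)) * cos θ) / (1 - exp (2 * k * (r - m s)))) =
        K ^ 2 * k * exp (2 * k * (r - m s)) *
          (1 - exp (k * (r - m s)) * cos θ) / (1 - exp (2 * k * (r - m s))) ^ 4 *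
          (1 - 3 * exp (k * (r - m s)) * cos θ + 3 * exp (2 * k * (r - m s)) -
            exp (3 * k * (r - m s)) * cos θ + 8 / ms ^ 2 * exp (2 * k * (r - m s))) :=
  vorticity_magnitude_key_identity_general k c ghat f β s θ K ms hc hghat hfs hK hms m γ₁ γ₂ γ₃ hγ₁
    hγ₂ hγ₃
end

section
/- For ξ < 0 the Lagrangian map (q,r) ↦ (x,z) with x = q - (1/k)e^{k r'} sin(kq'), z = r + (1/k)e^{kr'} cos(kq') (where r' = r - m(s), q' = q - ct at fixed s, t, shifting labels) is injective on each region where k(r - m(s)) < 0. -/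
open Real

/-!
In the complex coordinate `ζ = k (r - μ) + i k q` the map becomes `ζ ↦ ζ + conj (exp ζ)`, and the
region `r < μ` becomes the left half-plane. There `exp` is a strict contraction by the mean value
inequality, since `|exp'| = exp (re ζ) < 1`, so adding it to the identity cannot identify two
points.
-/

open ComplexConjugate

namespace Complex

theorem norm_exp_sub_exp_le_of_re_le {c : ℝ} {u v : ℂ} (hu : u.re ≤ c) (hv : v.re ≤ c) :
    ‖exp u - exp v‖ ≤ Real.exp c * ‖u - v‖ :=
  (convex_halfSpace_re_le c).norm_image_sub_le_of_norm_hasDerivWithin_le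
    (fun z _ => (hasDerivAt_exp z).hasDerivWithinAt)
    (fun z hz => by rw [norm_exp]; exact Real.exp_le_exp.2 hz) hv hu

theorem norm_exp_sub_exp_lt_of_re_neg {u v : ℂ} (hu : u.re < 0) (hv : v.re < 0) (huv : u ≠ v) :
    ‖exp u - exp v‖ < ‖u - v‖ := by
  have hc : Real.exp (max u.re v.re) < 1 := Real.exp_lt_one_iff.2 (max_lt hu hv)
  have hpos : 0 < ‖u - v‖ := norm_pos_iff.2 (sub_ne_zero.2 huv)
  calc ‖exp u - exp v‖ ≤ Real.exp (max u.re v.re) * ‖u - v‖ :=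
        norm_exp_sub_exp_le_of_re_le (le_max_left _ _) (le_max_right _ _)
    _ < ‖u - v‖ := mul_lt_of_lt_one_left hpos hc

theorem injOn_add_conj_exp : Set.InjOn (fun ζ => ζ + conj (exp ζ)) {ζ : ℂ | ζ.re < 0} := by
  intro u hu v hv huv
  by_contra hne
  have hsub : u - v = conj (exp v - exp u) := by
    rw [map_sub]; linear_combination huv
  have := norm_exp_sub_exp_lt_of_re_neg hv hu (Ne.symm hne)
  rw [norm_sub_rev v u, hsub, RCLike.norm_conj] at this
  exact lt_irrefl _ this

end Complex

/-- the Gerstner-type map is injective on the region r < μ. -/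
theorem gerstner_map_injective
    (k μ : ℝ) (hk : 0 < k)
    (G : ℝ × ℝ → ℝ × ℝ)
    (hG : ∀ p : ℝ × ℝ, G p =
      (p.1 - (1 / k) * exp (k * (p.2 - μ)) * sin (k * p.1),
       p.2 + (1 / k) * exp (k * (p.2 - μ)) * cos (k * p.1))) :
    Set.InjOn G {p : ℝ × ℝ | p.2 < μ} := by
  set T : ℝ × ℝ → ℂ := fun p => ⟨k * (p.2 - μ), k * p.1⟩
  have hT : T.Injective := fun p p' h => by
    have h₁ := congrArg Complex.re h
    have h₂ := congrArg Complex.im h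
    simp only [T, mul_right_inj' hk.ne', sub_left_inj] at h₁ h₂
    exact Prod.ext h₂ h₁
  have hTG : ∀ p, T (G p) = T p + conj (Complex.exp (T p)) := fun p => by
    apply Complex.ext <;>
      simp only [T, hG, Complex.add_re, Complex.add_im, Complex.conj_re, Complex.conj_im,
        Complex.exp_re, Complex.exp_im] <;> field_simp <;> ring
  intro p hp p' hp' h
  refine hT (Complex.injOn_add_conj_exp ?_ ?_ ?_)
  · exact mul_neg_of_pos_of_neg hk (sub_neg.2 hp)
  · exact mul_neg_of_pos_of_neg hk (sub_neg.2 hp')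
  · simp only [← hTG, h]
end
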